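/- With a = b = (1+x)/(1-x), g = 1/(1-x)^2, f = x/(1-x), the second-order correction a** = (1, -(1-x)/(1+x); -1/(1+x)^2, x/(1+x)) applied to (1+x)/(1-x) equals (1-x)/(1+x). Consequently, the element ((1+x)/(1-x), (1+x)/(1-x); 1/(1-x)^2, x/(1-x)) of the group of almost Riordan arrays of second order is a pseudo-involution: its inverse is ((1-x)/(1+x), (1-x)/(1+x); 1/(1+x)^2, x/(1+x)). -/

import Mathlib

open PowerSeries

/-- Composition f ∘ g of formal power series (intended for g with zero constant term). -/
noncomputable def comp (f g : ℚ⟦X⟧) : ℚ⟦X⟧ :=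
  PowerSeries.mk fun n => ∑ k ∈ Finset.range (n + 1),
    PowerSeries.coeff k f * PowerSeries.coeff n (g ^ k)

/-- (f(x) - f(0))/x. -/
noncomputable def shift (f : ℚ⟦X⟧) : ℚ⟦X⟧ := PowerSeries.mk fun n => PowerSeries.coeff (n + 1) f

/-- Action of the almost Riordan array (a; g, f) on a power series b. -/
noncomputable def aact (a g f b : ℚ⟦X⟧) : ℚ⟦X⟧ :=
  PowerSeries.C (PowerSeries.constantCoeff b) * a + PowerSeries.X * g * comp (shift b) f

/-- Product in the group of almost Riordan arrays of order 1 (triples (a; g, f)). -/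
noncomputable def amul (M N : ℚ⟦X⟧ × ℚ⟦X⟧ × ℚ⟦X⟧) : ℚ⟦X⟧ × ℚ⟦X⟧ × ℚ⟦X⟧ :=
  (aact M.1 M.2.1 M.2.2 N.1, M.2.1 * comp N.2.1 M.2.2, comp N.2.2 M.2.2)

/-- Product in the Riordan group (pairs (g, f)). -/
noncomputable def rmul (M N : ℚ⟦X⟧ × ℚ⟦X⟧) : ℚ⟦X⟧ × ℚ⟦X⟧ :=
  (M.1 * comp N.1 M.2, comp N.2 M.2)
/-- (h(x) - h(0) - h'(0)x)/x^2. -/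
noncomputable def shift2 (f : ℚ⟦X⟧) : ℚ⟦X⟧ := PowerSeries.mk fun n => PowerSeries.coeff (n + 2) f

/-- Action of the second-order almost Riordan array (a, b; g, f) on a power series h. -/
noncomputable def act2 (a b g f h : ℚ⟦X⟧) : ℚ⟦X⟧ :=
  PowerSeries.C (PowerSeries.constantCoeff h) * a +
    PowerSeries.C (PowerSeries.coeff 1 h) * X * b + X ^ 2 * g * comp (shift2 h) f

/-- Product in the group of almost Riordan arrays of second order. -/
noncomputable def amul2 (M N : ℚ⟦X⟧ × ℚ⟦X⟧ × ℚ⟦X⟧ × ℚ⟦X⟧) : ℚ⟦X⟧ × ℚ⟦X⟧ × ℚ⟦X⟧ × ℚ⟦X⟧ :=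
  (act2 M.1 M.2.1 M.2.2.1 M.2.2.2 N.1, aact M.2.1 M.2.2.1 M.2.2.2 N.2.1,
   M.2.2.1 * comp N.2.2.1 M.2.2.2, comp N.2.2.2 M.2.2.2)


/-!
Composition with a series of zero constant term is Mathlib's `PowerSeries.subst`, hence a ring
endomorphism, and it commutes with inversion. Both products are instances of
`cayleyArray s * cayleyArray (-s) = 1`, at `s = 1` and `s = -1`. Composition with `X/(1 - sX)`
sends `(1 + sX)⁻¹` to `1 - sX`, so once the series acted on is split as `c₀ + c₁X + X²w`, each
entry of that product, and the correction `a**`, reduces to a rational identity in `X`,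
`(1 - sX)⁻¹` and `(1 + sX)⁻¹`.
-/

theorem coeff_pow_of_lt {g : ℚ⟦X⟧} (hg : constantCoeff g = 0) {n k : ℕ} (hnk : n < k) :
    coeff n (g ^ k) = 0 :=
  X_pow_dvd_iff.mp (pow_dvd_pow_of_dvd (X_dvd_iff.mpr hg) k) n hnk

theorem comp_eq_subst {g : ℚ⟦X⟧} (hg : constantCoeff g = 0) (f : ℚ⟦X⟧) :
    comp f g = f.subst g := by
  ext n
  rw [comp, coeff_mk, coeff_subst' (HasSubst.of_constantCoeff_zero' hg),
    finsum_eq_sum_of_support_subset _ (s := Finset.range (n + 1))]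
  · simp only [smul_eq_mul]
  · intro k hk
    simp only [Function.mem_support, Finset.coe_range, Set.mem_Iio] at hk ⊢
    by_contra! hkn
    exact hk (by rw [coeff_pow_of_lt hg (by omega), smul_zero])

theorem comp_C (c : ℚ) (g : ℚ⟦X⟧) : comp (C c) g = C c := by
  ext n
  simp [comp, coeff_C]

theorem comp_one (g : ℚ⟦X⟧) : comp 1 g = 1 := by
  simpa using comp_C 1 g

theorem constantCoeff_comp (f g : ℚ⟦X⟧) : constantCoeff (comp f g) = constantCoeff f := by
  simp [comp]

section comp

variable {g : ℚ⟦X⟧}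

theorem comp_add (hg : constantCoeff g = 0) (f₁ f₂ : ℚ⟦X⟧) :
    comp (f₁ + f₂) g = comp f₁ g + comp f₂ g := by
  simp only [comp_eq_subst hg, subst_add (HasSubst.of_constantCoeff_zero' hg)]

theorem comp_mul (hg : constantCoeff g = 0) (f₁ f₂ : ℚ⟦X⟧) :
    comp (f₁ * f₂) g = comp f₁ g * comp f₂ g := by
  simp only [comp_eq_subst hg, subst_mul (HasSubst.of_constantCoeff_zero' hg)]

theorem comp_pow (hg : constantCoeff g = 0) (f : ℚ⟦X⟧) (n : ℕ) :
    comp (f ^ n) g = comp f g ^ n := by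
  simp only [comp_eq_subst hg, subst_pow (HasSubst.of_constantCoeff_zero' hg)]

theorem comp_X (hg : constantCoeff g = 0) : comp X g = g := by
  rw [comp_eq_subst hg, subst_X (HasSubst.of_constantCoeff_zero' hg)]

theorem comp_inv (hg : constantCoeff g = 0) (f : ℚ⟦X⟧) : comp f⁻¹ g = (comp f g)⁻¹ := by
  by_cases hf : constantCoeff f = 0
  · rw [PowerSeries.inv_eq_zero.mpr hf,
      PowerSeries.inv_eq_zero.mpr ((constantCoeff_comp f g).trans hf)]
    simpa using comp_C 0 g
  · rw [eq_inv_iff_mul_eq_one ((constantCoeff_comp f g).symm ▸ hf), ← comp_mul hg,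
      PowerSeries.inv_mul_cancel f hf, comp_one]

end comp

theorem aact_C_add_X_mul (a g f : ℚ⟦X⟧) (c : ℚ) (w : ℚ⟦X⟧) :
    aact a g f (C c + X * w) = C c * a + X * g * comp w f := by
  have hshift : shift (C c + X * w) = w := by
    ext n
    simp [shift]
  simp [aact, hshift]

theorem act2_C_add_C_mul_X_add_X_sq_mul (a b g f : ℚ⟦X⟧) (c₀ c₁ : ℚ) (w : ℚ⟦X⟧) :
    act2 a b g f (C c₀ + C c₁ * X + X ^ 2 * w) =
      C c₀ * a + C c₁ * X * b + X ^ 2 * g * comp w f := by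
  have hshift2 : shift2 (C c₀ + C c₁ * X + X ^ 2 * w) = w := by
    ext n
    simp [shift2, coeff_X_pow_mul']
  have h1 : coeff 1 (C c₀ + C c₁ * X + X ^ 2 * w) = c₁ := by
    simp [coeff_C, coeff_X_pow_mul']
  simp [act2, hshift2, h1]

noncomputable def cayley (s : ℚ) : ℚ⟦X⟧ := (1 + C s * X) * (1 - C s * X)⁻¹

/-- The array of the theorem conjugated by `diag(1, s, s², …)`, i.e. with `a`, `b`, `g` evaluated
at `sx` and `f` replaced by `f(sx)/s`; so `cayleyArray (-s)` should be its inverse. -/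
noncomputable def cayleyArray (s : ℚ) : ℚ⟦X⟧ × ℚ⟦X⟧ × ℚ⟦X⟧ × ℚ⟦X⟧ :=
  (cayley s, cayley s, (1 - C s * X)⁻¹ ^ 2, X * (1 - C s * X)⁻¹)

section cayley

variable (s : ℚ)

theorem one_sub_C_mul_X_mul_inv : (1 - C s * X) * (1 - C s * X)⁻¹ = 1 :=
  PowerSeries.mul_inv_cancel _ (by simp)

theorem cayley_eq_C_add_X_mul : cayley s = C 1 + X * (C (2 * s) * (1 - C s * X)⁻¹) := by
  rw [cayley, map_one, map_mul, map_ofNat]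
  linear_combination one_sub_C_mul_X_mul_inv s

theorem cayley_eq_C_add_C_mul_X_add_X_sq_mul :
    cayley s = C 1 + C (2 * s) * X + X ^ 2 * (C (2 * s ^ 2) * (1 - C s * X)⁻¹) := by
  rw [cayley, map_one, map_mul, map_mul, map_ofNat, map_pow]
  linear_combination (1 + 2 * C s * X) * one_sub_C_mul_X_mul_inv s

theorem constantCoeff_X_mul_inv_one_sub_C_mul_X : constantCoeff (X * (1 - C s * X)⁻¹) = 0 := by
  simp

theorem comp_inv_one_add_C_mul_X :
    comp (1 + C s * X)⁻¹ (X * (1 - C s * X)⁻¹) = 1 - C s * X := by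
  have hF := constantCoeff_X_mul_inv_one_sub_C_mul_X s
  rw [comp_inv hF, comp_add hF, comp_one, comp_mul hF, comp_C, comp_X hF,
    PowerSeries.inv_eq_iff_mul_eq_one (by simp)]
  linear_combination (C s * X) * one_sub_C_mul_X_mul_inv s

theorem amul2_cayleyArray_neg : amul2 (cayleyArray s) (cayleyArray (-s)) = (1, 1, 1, X) := by
  have hF := constantCoeff_X_mul_inv_one_sub_C_mul_X s
  have hv := one_sub_C_mul_X_mul_inv s
  simp only [amul2, cayleyArray, Prod.mk.injEq]
  refine ⟨?_, ?_, ?_, ?_⟩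
  · rw [cayley_eq_C_add_C_mul_X_add_X_sq_mul (-s), act2_C_add_C_mul_X_add_X_sq_mul, comp_mul hF,
      comp_C]
    simp only [cayley, map_one, map_mul, map_neg, map_ofNat, map_pow, neg_mul, sub_neg_eq_add,
      comp_inv_one_add_C_mul_X]
    linear_combination (1 + 2 * (C s * X) ^ 2 * (1 - C s * X)⁻¹) * hv
  · rw [cayley_eq_C_add_X_mul (-s), aact_C_add_X_mul, comp_mul hF, comp_C]
    simp only [cayley, map_one, map_mul, map_neg, map_ofNat, neg_mul, sub_neg_eq_add,
      comp_inv_one_add_C_mul_X]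
    linear_combination (1 - 2 * C s * X * (1 - C s * X)⁻¹) * hv
  · simp only [map_neg, neg_mul, sub_neg_eq_add, comp_pow hF, comp_inv_one_add_C_mul_X]
    linear_combination ((1 - C s * X) * (1 - C s * X)⁻¹ + 1) * hv
  · simp only [map_neg, neg_mul, sub_neg_eq_add, comp_mul hF, comp_X hF, comp_inv_one_add_C_mul_X]
    linear_combination X * hv

-- The correction `a**` of `cayleyArray s`, with `f̄ = X/(1 + sX)` and `1/(g ∘ f̄) = 1/(1 + sX)²`.
theorem act2_correction_cayley :
    act2 1 (-((1 - C s * X) * (1 + C s * X)⁻¹)) (-((1 + C s * X)⁻¹ ^ 2))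
      (X * (1 + C s * X)⁻¹) (cayley s) = (1 - C s * X) * (1 + C s * X)⁻¹ := by
  have hF := constantCoeff_X_mul_inv_one_sub_C_mul_X (-s)
  have hcomp := comp_inv_one_add_C_mul_X (-s)
  simp only [map_neg, neg_mul, sub_neg_eq_add, ← sub_eq_add_neg] at hF hcomp
  rw [cayley_eq_C_add_C_mul_X_add_X_sq_mul, act2_C_add_C_mul_X_add_X_sq_mul, comp_mul hF, comp_C,
    hcomp, map_one, map_mul, map_mul, map_ofNat, map_pow]
  linear_combination (-(1 + 2 * (C s * X) ^ 2 * (1 + C s * X)⁻¹)) *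
    PowerSeries.mul_inv_cancel (1 + C s * X) (by simp)

end cayley

/-- a** = (1, -(1-x)/(1+x); -1/(1+x)^2, x/(1+x)) applied to (1+x)/(1-x) equals (1-x)/(1+x);
consequently ((1+x)/(1-x), (1+x)/(1-x); 1/(1-x)^2, x/(1-x)) is a pseudo-involution in the
group of almost Riordan arrays of second order, with inverse
((1-x)/(1+x), (1-x)/(1+x); 1/(1+x)^2, x/(1+x)). -/
theorem second_order_pseudo_involution :
    act2 1 (-((1 - X : ℚ⟦X⟧) * (1 + X)⁻¹)) (-((1 + X)⁻¹ ^ 2)) (X * (1 + X)⁻¹)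
        ((1 + X) * (1 - X)⁻¹) = (1 - X) * (1 + X)⁻¹ ∧
    amul2 ((1 + X) * (1 - X)⁻¹, (1 + X) * (1 - X)⁻¹, (1 - X)⁻¹ ^ 2, X * (1 - X)⁻¹)
          ((1 - X) * (1 + X)⁻¹, (1 - X) * (1 + X)⁻¹, (1 + X)⁻¹ ^ 2, X * (1 + X)⁻¹)
      = (1, 1, 1, X) ∧
    amul2 ((1 - X) * (1 + X)⁻¹, (1 - X) * (1 + X)⁻¹, (1 + X)⁻¹ ^ 2, X * (1 + X)⁻¹)
          ((1 + X) * (1 - X)⁻¹, (1 + X) * (1 - X)⁻¹, (1 - X)⁻¹ ^ 2, X * (1 - X)⁻¹)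
      = (1, 1, 1, X) := by
  refine ⟨?_, ?_, ?_⟩
  · simpa [cayley] using act2_correction_cayley 1
  · simpa [cayleyArray, cayley, ← sub_eq_add_neg] using amul2_cayleyArray_neg 1
  · simpa [cayleyArray, cayley, ← sub_eq_add_neg] using amul2_cayleyArray_neg (-1)
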